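/- arXiv:math/0411286 — 2 statements merged into one kernel-verified Lean document; each statement's English description precedes it below -/
import Mathlib

section
/- The sum of transpositions C = s_{12} + s_{13} + ... + s_{1N} in the group algebra of S_N acts on the irreducible representation W_λ associated to a Young diagram λ by a scalar if and only if λ is a rectangle; in that case the scalar equals 2·C(λ)/N, where C(λ) is the content of λ. -/
open Finset Equiv MonoidAlgebra
open scoped Classical

/-- The canonical filling of the cells of `lam` by `{1, …, N}` (an arbitrary bijective
tableau), for `lam` a Young diagram with `N` cells. -/
noncomputable def tab (N : ℕ) (lam : YoungDiagram) (h : lam.cells.card = N) :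
    Fin N ≃ lam.cells :=
  (finCongr h.symm).trans lam.cells.equivFin.symm

/-- The Young symmetrizer `c_λ = a_λ ⋅ b_λ` in `ℂ[S_N]` associated to the canonical
tableau of `lam`: `a_λ` is the sum over the row group, and `b_λ` the signed sum over the
column group. -/
noncomputable def youngSym (N : ℕ) (lam : YoungDiagram) (h : lam.cells.card = N) :
    MonoidAlgebra ℂ (Equiv.Perm (Fin N)) :=
  (∑ σ ∈ univ.filter (fun σ : Equiv.Perm (Fin N) =>
      ∀ i, (tab N lam h (σ i)).val.1 = (tab N lam h i).val.1),
    MonoidAlgebra.single σ (1 : ℂ)) *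
  (∑ σ ∈ univ.filter (fun σ : Equiv.Perm (Fin N) =>
      ∀ i, (tab N lam h (σ i)).val.2 = (tab N lam h i).val.2),
    MonoidAlgebra.single σ ((Equiv.Perm.sign σ : ℤ) : ℂ))

/-- The Specht module `W_λ = ℂ[S_N] ⋅ c_λ`, the irreducible representation of `S_N`
attached to `lam`, realized as a left ideal of the group algebra. -/
noncomputable def spechtModule (N : ℕ) (lam : YoungDiagram) (h : lam.cells.card = N) :
    Submodule ℂ (MonoidAlgebra ℂ (Equiv.Perm (Fin N))) :=
  LinearMap.range (LinearMap.mulRight ℂ (youngSym N lam h))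

/-- A Young diagram is a rectangle when its cells form a product `[0,a) × [0,b)`. -/
def IsRectangle (lam : YoungDiagram) : Prop :=
  ∃ a b : ℕ, lam.cells = Finset.range a ×ˢ Finset.range b

/-- The content of a Young diagram: the sum of `j - i` over all cells `(i, j)`. -/
def content (lam : YoungDiagram) : ℤ := ∑ c ∈ lam.cells, ((c.2 : ℤ) - (c.1 : ℤ))

/-!
Write `X_m = ∑_{j ≠ m} (m j)`, and `c` for the Young symmetrizer with row group `R` and column
group `C`. Since `g⁻¹ X_i g = X_{g⁻¹ i}`, the element `X_i` acts by `κ` on `ℂ[S_N] c` iff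
`X_m c = κ c` for every letter `m`. The coefficient of `c` is `1` at `1`, and at a transposition
`(m j)` it is `1`, `-1` or `0` according as `j` shares the row of `m`, its column, or neither; so
the coefficient of `X_m c` at `1` is `rowLen - colLen` at the cell of `m`, which is constant only
on a rectangle. Conversely, for an `a × b` rectangle, `X_m c = (b - a) c` is checked
coefficientwise: on `R C` because both sides are left `R`-invariant and right `C`-sign-equivariant,
off `R C` because the surviving terms cancel in pairs. Finally `2 C(λ) = ab (b - a)` and `N = ab`.
-/

open scoped Pointwise

namespace Equiv.Perm

variable {α β : Type*} [Fintype α] [DecidableEq α] [DecidableEq β]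

def fiberPerms (f : α → β) : Finset (Perm α) :=
  Finset.univ.filter fun σ => ∀ i, f (σ i) = f i

variable {f : α → β} {σ τ : Perm α}

@[simp]
theorem mem_fiberPerms : σ ∈ fiberPerms f ↔ ∀ i, f (σ i) = f i := by
  simp [fiberPerms]

theorem one_mem_fiberPerms : 1 ∈ fiberPerms f := by simp

theorem mul_mem_fiberPerms (hσ : σ ∈ fiberPerms f) (hτ : τ ∈ fiberPerms f) :
    σ * τ ∈ fiberPerms f := by
  simp_all

theorem inv_mem_fiberPerms (hσ : σ ∈ fiberPerms f) : σ⁻¹ ∈ fiberPerms f := by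
  rw [mem_fiberPerms] at hσ ⊢
  intro i
  simpa using (hσ (σ⁻¹ i)).symm

theorem swap_mem_fiberPerms {x y : α} (hxy : f x = f y) : swap x y ∈ fiberPerms f := by
  rw [mem_fiberPerms]
  intro i
  rcases eq_or_ne i x with rfl | hx
  · simpa using hxy.symm
  rcases eq_or_ne i y with rfl | hy
  · simpa using hxy
  · rw [swap_apply_of_ne_of_ne hx hy]

theorem eq_one_of_mem_fiberPerms_inter {γ : Type*} [DecidableEq γ] {g : α → γ}
    (hfg : Function.Injective fun i => (f i, g i)) (hf : σ ∈ fiberPerms f)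
    (hg : σ ∈ fiberPerms g) : σ = 1 :=
  Equiv.ext fun i => hfg (Prod.ext (mem_fiberPerms.1 hf i) (mem_fiberPerms.1 hg i))

theorem sum_filter_ne_apply {M : Type*} [AddCommMonoid M] (F : α → M) (i : α) (g : Perm α) :
    ∑ j ∈ Finset.univ.filter (· ≠ i), F (g j) = ∑ j ∈ Finset.univ.filter (· ≠ g i), F j :=
  Finset.sum_equiv g (by simp) (fun _ _ => rfl)

end Equiv.Perm

namespace MonoidAlgebra

open Equiv.Perm

variable {k α : Type*} [Fintype α] [DecidableEq α]

variable (k) in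
noncomputable def swapSum [Semiring k] (i : α) : MonoidAlgebra k (Perm α) :=
  ∑ j ∈ Finset.univ.filter (· ≠ i), single (swap i j) 1

theorem swapSum_mul_single [Semiring k] (i : α) (g : Perm α) (r : k) :
    swapSum k i * single g r = single g r * swapSum k (g⁻¹ i) := by
  rw [swapSum, swapSum, Finset.sum_mul, Finset.mul_sum,
    ← sum_filter_ne_apply (fun j => single g r * single (swap (g⁻¹ i) j) 1) i g⁻¹]
  refine Finset.sum_congr rfl fun j _ => ?_
  rw [single_mul_single, single_mul_single, one_mul, mul_one, swap_mul_eq_mul_swap]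

theorem coeff_swapSum_mul [Semiring k] (i : α) (x : MonoidAlgebra k (Perm α)) (w : Perm α) :
    (swapSum k i * x).coeff w = ∑ j ∈ Finset.univ.filter (· ≠ i), x.coeff (swap i j * w) := by
  simp [swapSum, Finset.sum_mul, coeff_sum, Finset.sum_apply', coeff_single_mul_apply]

theorem swapSum_mul_eq_smul_on_range_mulRight_iff [CommSemiring k]
    (y : MonoidAlgebra k (Perm α)) (i : α) (κ : k) :
    (∀ w ∈ LinearMap.range (LinearMap.mulRight k y), swapSum k i * w = κ • w) ↔
      ∀ m, swapSum k m * y = κ • y := by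
  constructor
  · intro H m
    have hm := H (single (swap i m) 1 * y) ⟨_, rfl⟩
    rw [← mul_assoc, swapSum_mul_single, swap_inv, swap_apply_left, mul_assoc,
      ← mul_smul_comm] at hm
    simpa [← mul_assoc, single_mul_single, ← one_def] using
      congrArg (single (swap i m) (1 : k) * ·) hm
  · rintro H _ ⟨x, rfl⟩
    induction x using induction_linear with
    | zero => simp
    | add f g hf hg =>
      simp only [LinearMap.mulRight_apply, add_mul, mul_add, smul_add] at *
      rw [hf, hg]
    | single g r =>
      rw [LinearMap.mulRight_apply, ← mul_assoc, swapSum_mul_single, mul_assoc, H, mul_smul_comm]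

end MonoidAlgebra

open Equiv.Perm

section Rectangle

variable {lam : YoungDiagram} {a b : ℕ}

theorem rowLen_of_cells_eq (hab : lam.cells = range a ×ˢ range b) {i : ℕ} (hi : i < a) :
    lam.rowLen i = b :=
  eq_of_forall_lt_iff fun j => by
    rw [← YoungDiagram.mem_iff_lt_rowLen, ← YoungDiagram.mem_cells, hab]
    simp [hi]

theorem colLen_of_cells_eq (hab : lam.cells = range a ×ˢ range b) {j : ℕ} (hj : j < b) :
    lam.colLen j = a :=
  eq_of_forall_lt_iff fun i => by
    rw [← YoungDiagram.mem_iff_lt_colLen, ← YoungDiagram.mem_cells, hab]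
    simp [hj]

theorem two_mul_content_of_cells_eq (hab : lam.cells = range a ×ˢ range b) :
    2 * content lam = a * b * ((b : ℤ) - a) := by
  have gauss : ∀ n : ℕ, 2 * ∑ i ∈ range n, (i : ℤ) = n * (n - 1) := fun n => by
    induction n with
    | zero => simp
    | succ n ih => rw [sum_range_succ]; push_cast; linear_combination ih
  simp only [content, hab, sum_product, sum_sub_distrib, sum_const, card_range, nsmul_eq_mul,
    ← mul_sum]
  linear_combination (a : ℤ) * gauss b - (b : ℤ) * gauss a

theorem two_mul_content_div_card_of_cells_eq {K : Type*} [Field K] [CharZero K]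
    (hab : lam.cells = range a ×ˢ range b) (hne : lam.cells.Nonempty) :
    2 * (content lam : K) / #lam.cells = b - a := by
  have hcontent := congrArg (Int.cast : ℤ → K) (two_mul_content_of_cells_eq hab)
  push_cast at hcontent
  rw [div_eq_iff (Nat.cast_ne_zero.2 hne.card_pos.ne'), hcontent, hab]
  simp only [card_product, card_range, Nat.cast_mul]
  ring

theorem isRectangle_of_rowLen_sub_colLen_eq {R : Type*} [AddGroupWithOne R] [CharZero R]
    (hne : lam.cells.Nonempty) (κ : R)
    (hκ : ∀ c ∈ lam, (lam.rowLen c.1 : R) - lam.colLen c.2 = κ) : IsRectangle lam := by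
  have h00 : (0, 0) ∈ lam := by
    obtain ⟨c, hc⟩ := hne
    exact lam.up_left_mem (Nat.zero_le _) (Nat.zero_le _) hc
  have hrow : ∀ i < lam.colLen 0, lam.rowLen i = lam.rowLen 0 := fun i hi => by
    have hi := hκ (i, 0) (YoungDiagram.mem_iff_lt_colLen.2 hi)
    rw [← hκ (0, 0) h00, sub_left_inj] at hi
    exact_mod_cast hi
  refine ⟨lam.colLen 0, lam.rowLen 0, ext fun ⟨i, j⟩ => ?_⟩
  simp only [mem_product, mem_range, YoungDiagram.mem_cells]
  constructor
  · intro hij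
    have hi : i < lam.colLen 0 :=
      YoungDiagram.mem_iff_lt_colLen.1 (lam.up_left_mem le_rfl (Nat.zero_le _) hij)
    exact ⟨hi, hrow i hi ▸ YoungDiagram.mem_iff_lt_rowLen.1 hij⟩
  · rintro ⟨hi, hj⟩
    exact YoungDiagram.mem_iff_lt_rowLen.2 (hrow i hi ▸ hj)

end Rectangle

section Tableau

variable {N : ℕ} {lam : YoungDiagram} (h : lam.cells.card = N)

noncomputable def tabRow (i : Fin N) : ℕ := (tab N lam h i).val.1

noncomputable def tabCol (i : Fin N) : ℕ := (tab N lam h i).val.2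

theorem youngSym_eq : youngSym N lam h =
    (∑ σ ∈ fiberPerms (tabRow h), single σ (1 : ℂ)) *
      ∑ σ ∈ fiberPerms (tabCol h), single σ ((sign σ : ℤ) : ℂ) := by
  unfold youngSym fiberPerms tabRow tabCol
  congr

theorem tabRow_tabCol_mem (i : Fin N) : (tabRow h i, tabCol h i) ∈ lam :=
  (tab N lam h i).2

theorem exists_tabRow_tabCol_eq {c : ℕ × ℕ} (hc : c ∈ lam) :
    ∃ z, (tabRow h z, tabCol h z) = c :=
  ⟨(tab N lam h).symm ⟨c, hc⟩, by simp [tabRow, tabCol]⟩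

theorem injective_tabRow_tabCol : Function.Injective fun i => (tabRow h i, tabCol h i) :=
  fun _ _ hij => (tab N lam h).injective (Subtype.ext hij)

theorem card_filter_tab_eq (P : ℕ × ℕ → Prop) [DecidablePred P] :
    #(univ.filter fun j => P (tabRow h j, tabCol h j)) = #(lam.cells.filter P) :=
  card_bij (fun j _ => (tabRow h j, tabCol h j))
    (fun j hj => mem_filter.2 ⟨tabRow_tabCol_mem h j, (mem_filter.1 hj).2⟩)
    (fun _ _ _ _ hij => injective_tabRow_tabCol h hij)
    (fun c hc => by
      obtain ⟨hc, hPc⟩ := mem_filter.1 hc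
      obtain ⟨z, rfl⟩ := exists_tabRow_tabCol_eq h hc
      exact ⟨z, by simpa using hPc, rfl⟩)

theorem card_filter_tabRow_eq (r : ℕ) :
    #(univ.filter fun j => tabRow h j = r) = lam.rowLen r := by
  rw [lam.rowLen_eq_card, YoungDiagram.row]
  exact card_filter_tab_eq h (fun c => c.1 = r)

theorem card_filter_tabCol_eq (c : ℕ) :
    #(univ.filter fun j => tabCol h j = c) = lam.colLen c := by
  rw [lam.colLen_eq_card, YoungDiagram.col]
  exact card_filter_tab_eq h (fun c' => c'.2 = c)

end Tableau

section YoungSymmetrizer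

variable {N : ℕ} {lam : YoungDiagram} (h : lam.cells.card = N) {p q w : Perm (Fin N)}

local notation "R" => fiberPerms (tabRow h)
local notation "C" => fiberPerms (tabCol h)

theorem single_mul_youngSym (hp : p ∈ R) : single p 1 * youngSym N lam h = youngSym N lam h := by
  have hR : single p 1 * ∑ σ ∈ R, single σ (1 : ℂ) = ∑ σ ∈ R, single σ 1 := by
    rw [mul_sum]
    refine sum_equiv (Equiv.mulLeft p) (fun σ => ⟨mul_mem_fiberPerms hp, fun hσ => ?_⟩)
      (fun σ _ => by simp [single_mul_single])
    simpa using mul_mem_fiberPerms (inv_mem_fiberPerms hp) hσ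
  rw [youngSym_eq, ← mul_assoc, hR]

theorem youngSym_mul_single (hq : q ∈ C) :
    youngSym N lam h * single q 1 = ((sign q : ℤ) : ℂ) • youngSym N lam h := by
  have hC : (∑ σ ∈ C, single σ ((sign σ : ℤ) : ℂ)) * single q 1 =
      ((sign q : ℤ) : ℂ) • ∑ σ ∈ C, single σ ((sign σ : ℤ) : ℂ) := by
    rw [sum_mul, smul_sum]
    refine sum_equiv (Equiv.mulRight q)
      (fun σ => ⟨fun hσ => mul_mem_fiberPerms hσ hq, fun hσ => ?_⟩) (fun σ _ => ?_)
    · simpa using mul_mem_fiberPerms hσ (inv_mem_fiberPerms hq)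
    · rw [single_mul_single, smul_single', mul_one]
      rcases Int.units_eq_one_or (sign q) with hs | hs <;> simp [hs]
  rw [youngSym_eq, mul_assoc, hC, mul_smul_comm]

theorem youngSym_coeff_mul_left (hp : p ∈ R) (w : Perm (Fin N)) :
    (youngSym N lam h).coeff (p * w) = (youngSym N lam h).coeff w := by
  conv_rhs => rw [← single_mul_youngSym h (inv_mem_fiberPerms hp)]
  simp [coeff_single_mul_apply]

theorem youngSym_coeff_mul_right (hq : q ∈ C) (w : Perm (Fin N)) :
    (youngSym N lam h).coeff (w * q) = ((sign q : ℤ) : ℂ) * (youngSym N lam h).coeff w := by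
  simpa [coeff_mul_single_apply] using
    congrArg (fun x => x.coeff w) (youngSym_mul_single h (inv_mem_fiberPerms hq))

theorem youngSym_coeff (w : Perm (Fin N)) : (youngSym N lam h).coeff w =
    ∑ p ∈ R, ∑ q ∈ C, if p * q = w then ((sign q : ℤ) : ℂ) else 0 := by
  simp [youngSym_eq, sum_mul_sum, coeff_sum, sum_apply', single_mul_single,
    coeff_single, Finsupp.single_apply]

theorem youngSym_coeff_one : (youngSym N lam h).coeff 1 = 1 := by
  rw [youngSym_coeff, sum_eq_single_of_mem 1 one_mem_fiberPerms,
    sum_eq_single_of_mem 1 one_mem_fiberPerms]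
  · simp
  · intro q _ hq
    simp [hq]
  · intro p hp hp1
    refine sum_eq_zero fun q hq => if_neg fun hpq => hp1 ?_
    rw [eq_inv_of_mul_eq_one_left hpq] at hp ⊢
    exact eq_one_of_mem_fiberPerms_inter (injective_tabRow_tabCol h) hp (inv_mem_fiberPerms hq)

theorem youngSym_coeff_mul (hp : p ∈ R) (hq : q ∈ C) :
    (youngSym N lam h).coeff (p * q) = ((sign q : ℤ) : ℂ) := by
  simpa [youngSym_coeff_mul_left h hp, youngSym_coeff_one] using youngSym_coeff_mul_right h hq 1

theorem youngSym_coeff_eq_zero_of_notMem (hw : w ∉ R * C) :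
    (youngSym N lam h).coeff w = 0 := by
  rw [youngSym_coeff]
  exact sum_eq_zero fun p hp => sum_eq_zero fun q hq =>
    if_neg fun hpq => hw (mem_mul.2 ⟨p, hp, q, hq, hpq⟩)

/-- Von Neumann's argument: the row transposition `(x y)` and the column transposition
`(w⁻¹ x, w⁻¹ y)` satisfy `(x y) * w = w * (w⁻¹ x, w⁻¹ y)`, and they act with opposite signs. -/
theorem youngSym_coeff_eq_zero_of_swap {x y : Fin N} (hxy : x ≠ y)
    (hr : tabRow h x = tabRow h y) (hc : tabCol h (w⁻¹ x) = tabCol h (w⁻¹ y)) :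
    (youngSym N lam h).coeff w = 0 := by
  have hxy' : w⁻¹ x ≠ w⁻¹ y := (EquivLike.injective w⁻¹).ne hxy
  have hw := youngSym_coeff_mul_left h (swap_mem_fiberPerms hr) w
  rw [swap_mul_eq_mul_swap, youngSym_coeff_mul_right h (swap_mem_fiberPerms hc),
    sign_swap hxy'] at hw
  push_cast at hw
  linear_combination -hw / 2

theorem youngSym_coeff_swap_of_tabRow_eq {x y : Fin N} (hr : tabRow h x = tabRow h y) :
    (youngSym N lam h).coeff (swap x y) = 1 := by
  simpa [youngSym_coeff_one] using youngSym_coeff_mul_left h (swap_mem_fiberPerms hr) 1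

theorem youngSym_coeff_swap_of_tabCol_eq {x y : Fin N} (hxy : x ≠ y)
    (hc : tabCol h x = tabCol h y) : (youngSym N lam h).coeff (swap x y) = -1 := by
  simpa [youngSym_coeff_one, sign_swap hxy] using
    youngSym_coeff_mul_right h (swap_mem_fiberPerms hc) 1

theorem youngSym_coeff_swap_of_ne {x y : Fin N} (hr : tabRow h x ≠ tabRow h y)
    (hc : tabCol h x ≠ tabCol h y) : (youngSym N lam h).coeff (swap x y) = 0 := by
  wlog hlt : tabCol h x < tabCol h y generalizing x y
  · rw [swap_comm]
    exact this hr.symm hc.symm (lt_of_le_of_ne (not_lt.1 hlt) hc.symm)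
  obtain ⟨z, hz⟩ := exists_tabRow_tabCol_eq h
    (lam.up_left_mem le_rfl hlt.le (tabRow_tabCol_mem h y))
  simp only [Prod.mk.injEq] at hz
  have hzx : z ≠ x := fun hzx => hr (hzx ▸ hz.1)
  have hzy : z ≠ y := fun hzy => hc (hzy ▸ hz.2).symm
  refine youngSym_coeff_eq_zero_of_swap h hzy.symm hz.1.symm ?_
  rw [swap_inv, swap_apply_right, swap_apply_of_ne_of_ne hzx hzy, hz.2]

theorem youngSym_coeff_swap {j m : Fin N} (hjm : j ≠ m) :
    (youngSym N lam h).coeff (swap m j) =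
      (if tabRow h j = tabRow h m then 1 else 0) - (if tabCol h j = tabCol h m then 1 else 0) := by
  by_cases hr : tabRow h j = tabRow h m
  · have hc : tabCol h j ≠ tabCol h m := fun hc =>
      hjm (injective_tabRow_tabCol h (by simp [hr, hc]))
    simp [hr, hc, youngSym_coeff_swap_of_tabRow_eq h hr.symm]
  · by_cases hc : tabCol h j = tabCol h m
    · simp [hr, hc, youngSym_coeff_swap_of_tabCol_eq h hjm.symm hc.symm]
    · simp [hr, hc, youngSym_coeff_swap_of_ne h (Ne.symm hr) (Ne.symm hc)]

theorem sum_youngSym_coeff_swap (m : Fin N) :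
    ∑ j ∈ univ.filter (· ≠ m), (youngSym N lam h).coeff (swap m j) =
      (lam.rowLen (tabRow h m) : ℂ) - lam.colLen (tabCol h m) := by
  calc ∑ j ∈ univ.filter (· ≠ m), (youngSym N lam h).coeff (swap m j)
      = ∑ j ∈ univ.filter (· ≠ m),
          ((if tabRow h j = tabRow h m then 1 else 0) -
            (if tabCol h j = tabCol h m then 1 else 0) : ℂ) :=
        sum_congr rfl fun j hj => youngSym_coeff_swap h (mem_filter.1 hj).2
    _ = ∑ j, ((if tabRow h j = tabRow h m then 1 else 0) -
            (if tabCol h j = tabCol h m then 1 else 0) : ℂ) :=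
        sum_filter_of_ne fun j _ hj hjm => hj (by simp [hjm])
    _ = (lam.rowLen (tabRow h m) : ℂ) - lam.colLen (tabCol h m) := by
        simp [sum_sub_distrib, sum_boole, card_filter_tabRow_eq,
          card_filter_tabCol_eq]

theorem swapSum_mul_youngSym_coeff_one (m : Fin N) :
    (swapSum ℂ m * youngSym N lam h).coeff 1 =
      (lam.rowLen (tabRow h m) : ℂ) - lam.colLen (tabCol h m) := by
  simpa [coeff_swapSum_mul] using sum_youngSym_coeff_swap h m

theorem eq_rowLen_sub_colLen_of_swapSum_mul_youngSym {m : Fin N} {κ : ℂ}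
    (hκ : swapSum ℂ m * youngSym N lam h = κ • youngSym N lam h) :
    κ = (lam.rowLen (tabRow h m) : ℂ) - lam.colLen (tabCol h m) := by
  simpa [swapSum_mul_youngSym_coeff_one, youngSym_coeff_one] using
    (congrArg (fun x => x.coeff 1) hκ).symm

theorem swapSum_mul_youngSym_coeff_mul_mul (hp : p ∈ R) (hq : q ∈ C) (m : Fin N)
    (s : Perm (Fin N)) :
    (swapSum ℂ m * youngSym N lam h).coeff (p * s * q) =
      ((sign q : ℤ) : ℂ) * (swapSum ℂ (p⁻¹ m) * youngSym N lam h).coeff s := by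
  conv_lhs => rw [← single_mul_youngSym h hp, ← mul_assoc, swapSum_mul_single, mul_assoc,
    coeff_single_mul_apply, one_mul, mul_assoc p, inv_mul_cancel_left]
  rw [coeff_swapSum_mul, coeff_swapSum_mul, mul_sum]
  refine sum_congr rfl fun j _ => ?_
  rw [← mul_assoc, youngSym_coeff_mul_right h hq]

variable {a b : ℕ} (hab : lam.cells = range a ×ˢ range b)
include hab

/-- With `z` the letter in the cell `(row y, col x)`, which exists because `λ` is a rectangle,
only the terms `j = y` and `j = z` survive, and they cancel. -/
theorem swapSum_mul_youngSym_coeff_swap_eq_zero {x y : Fin N} (hr : tabRow h x ≠ tabRow h y)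
    (hc : tabCol h x ≠ tabCol h y) : (swapSum ℂ x * youngSym N lam h).coeff (swap x y) = 0 := by
  have hxy : x ≠ y := fun hxy => hr (hxy ▸ rfl)
  have hmem : (tabRow h y, tabCol h x) ∈ lam := by
    have hx := tabRow_tabCol_mem h x
    have hy := tabRow_tabCol_mem h y
    rw [← YoungDiagram.mem_cells, hab, mem_product] at hx hy ⊢
    exact ⟨hy.1, hx.2⟩
  obtain ⟨z, hz⟩ := exists_tabRow_tabCol_eq h hmem
  simp only [Prod.mk.injEq] at hz
  have hzx : z ≠ x := fun hzx => hr (hzx ▸ hz.1)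
  have hzy : z ≠ y := fun hzy => hc (hzy ▸ hz.2).symm
  rw [coeff_swapSum_mul, sum_eq_add y z hzy.symm]
  · rw [swap_mul_self, youngSym_coeff_one, mul_swap_eq_swap_mul, swap_apply_left,
      swap_apply_of_ne_of_ne hxy.symm hzy.symm,
      youngSym_coeff_mul_left h (swap_mem_fiberPerms hz.1),
      youngSym_coeff_swap_of_tabCol_eq h hzx.symm hz.2.symm, add_neg_cancel]
  · intro j _ hjyz
    refine youngSym_coeff_eq_zero_of_swap h hzy.symm hz.1.symm ?_
    simp [swap_apply_of_ne_of_ne, hxy.symm, hzx, hzy, Ne.symm hjyz.1, Ne.symm hjyz.2, hz.2]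
  · simp [hxy.symm]
  · simp [hzx]

theorem swapSum_mul_youngSym_coeff_eq_zero_of_notMem (m : Fin N) (hw : w ∉ R * C) :
    (swapSum ℂ m * youngSym N lam h).coeff w = 0 := by
  by_cases hzero : ∀ j ∈ univ.filter (· ≠ m), (youngSym N lam h).coeff (swap m j * w) = 0
  · rw [coeff_swapSum_mul]
    exact sum_eq_zero hzero
  push Not at hzero
  obtain ⟨j, -, hj⟩ := hzero
  obtain ⟨p, hp, q, hq, hpq⟩ :=
    mem_mul.1 (not_imp_comm.1 (youngSym_coeff_eq_zero_of_notMem h) hj)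
  have hw' : w = p * swap (p⁻¹ m) (p⁻¹ j) * q := by
    simp [mul_swap_eq_swap_mul, mul_assoc, hpq]
  rw [hw', swapSum_mul_youngSym_coeff_mul_mul h hp hq,
    swapSum_mul_youngSym_coeff_swap_eq_zero h hab, mul_zero]
  · exact fun hr => hw (hw' ▸ mem_mul.2
      ⟨_, mul_mem_fiberPerms hp (swap_mem_fiberPerms hr), q, hq, rfl⟩)
  · exact fun hc => hw (hw' ▸ mem_mul.2
      ⟨p, hp, _, mul_mem_fiberPerms (swap_mem_fiberPerms hc) hq, (mul_assoc _ _ _).symm⟩)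

theorem swapSum_mul_youngSym_of_cells_eq (m : Fin N) :
    swapSum ℂ m * youngSym N lam h = ((b : ℂ) - a) • youngSym N lam h := by
  ext w
  rw [coeff_smul_apply, smul_eq_mul]
  by_cases hw : w ∈ R * C
  · obtain ⟨p, hp, q, hq, rfl⟩ := mem_mul.1 hw
    have hcell := tabRow_tabCol_mem h (p⁻¹ m)
    rw [← YoungDiagram.mem_cells, hab, mem_product, mem_range, mem_range] at hcell
    have hpq := swapSum_mul_youngSym_coeff_mul_mul h hp hq m 1
    rw [mul_one, swapSum_mul_youngSym_coeff_one, rowLen_of_cells_eq hab hcell.1,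
      colLen_of_cells_eq hab hcell.2] at hpq
    rw [hpq, youngSym_coeff_mul h hp hq, mul_comm]
  · rw [swapSum_mul_youngSym_coeff_eq_zero_of_notMem h hab m hw,
      youngSym_coeff_eq_zero_of_notMem h hw, mul_zero]

end YoungSymmetrizer

/-- The element `C = s_{1,2} + … + s_{1,N}` of `ℂ[S_N]` acts on the
irreducible representation `W_λ` by a scalar if and only if `λ` is a rectangle, in which
case the scalar equals `2 C(λ) / N`. -/
theorem jucys_murphy_scalar_iff_rectangle (N : ℕ) (lam : YoungDiagram)
    (hcard : lam.cells.card = N) (i0 : Fin N) :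
    ((∃ κ : ℂ, ∀ w ∈ spechtModule N lam hcard,
        (∑ j ∈ univ.filter (· ≠ i0),
          MonoidAlgebra.single (Equiv.swap i0 j) (1 : ℂ)) * w = κ • w)
      ↔ IsRectangle lam)
    ∧ (IsRectangle lam → ∀ w ∈ spechtModule N lam hcard,
        (∑ j ∈ univ.filter (· ≠ i0),
          MonoidAlgebra.single (Equiv.swap i0 j) (1 : ℂ)) * w
          = (2 * (content lam : ℂ) / (N : ℂ)) • w) := by
  have hne : lam.cells.Nonempty := card_pos.1 (hcard ▸ i0.pos)
  have hscalar : IsRectangle lam → ∀ w ∈ spechtModule N lam hcard,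
      swapSum ℂ i0 * w = (2 * (content lam : ℂ) / N) • w := by
    rintro ⟨a, b, hab⟩
    have hκ : 2 * (content lam : ℂ) / N = b - a :=
      hcard ▸ two_mul_content_div_card_of_cells_eq hab hne
    rw [hκ]
    exact (swapSum_mul_eq_smul_on_range_mulRight_iff _ i0 _).2
      (swapSum_mul_youngSym_of_cells_eq hcard hab)
  refine ⟨⟨fun ⟨κ, hκ⟩ => ?_, fun hrect => ⟨_, hscalar hrect⟩⟩, hscalar⟩
  have hκ := (swapSum_mul_eq_smul_on_range_mulRight_iff _ i0 κ).1 hκ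
  refine isRectangle_of_rowLen_sub_colLen_eq hne κ fun c hc => ?_
  obtain ⟨m, rfl⟩ := exists_tabRow_tabCol_eq hcard hc
  exact (eq_rowLen_sub_colLen_of_swapSum_mul_youngSym hcard (hκ m)).symm
end

section
/- Let Γ be a nontrivial finite subgroup of SL(2,C) and let L = C² be its tautological 2-dimensional representation. Then for every irreducible complex representation Y of Γ, Hom_Γ(L ⊗ Y, Y) = 0. Equivalently, the McKay graph of Γ has no loops at any vertex. -/
/-!
Write `F v = f (v ⊗ ·) ∈ End Y`. Since `Γ ⊂ SL(2)`, the map `u y = e₀ ⊗ F e₁ y - e₁ ⊗ F e₀ y`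
is equivariant, and `f ∘ u = F e₀ F e₁ - F e₁ F e₀` is a traceless endomorphism of the
irreducible `Y`, hence zero by Schur's lemma. So if `f ≠ 0`, then `0 → Y → L ⊗ Y → Y → 0`
(via `u` and `f`) is exact and equivariant, and taking traces gives `χ_L(γ) χ_Y(γ) = 2 χ_Y(γ)`.
But the character of an irreducible representation of a nontrivial finite group is nonzero at
some `γ ≠ e`, while an element of finite order of `SL(2, ℂ)` with trace `2` is the identity.
-/

open Matrix TensorProduct LinearMap
open scoped MatrixGroups

theorem LinearMap.sub_flip_mulVec_fin_two {R N : Type*} [CommRing R] [AddCommGroup N]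
    [Module R N] (B : (Fin 2 → R) →ₗ[R] (Fin 2 → R) →ₗ[R] N) (A : Matrix (Fin 2) (Fin 2) R)
    (v w : Fin 2 → R) :
    B (A *ᵥ v) (A *ᵥ w) - B (A *ᵥ w) (A *ᵥ v) = A.det • (B v w - B w v) := by
  have hx (x : Fin 2 → R) : x = x 0 • Pi.single 0 1 + x 1 • Pi.single 1 1 := by
    ext i; fin_cases i <;> simp
  conv_lhs => rw [hx (A *ᵥ v), hx (A *ᵥ w)]
  conv_rhs => rw [hx v, hx w]
  simp only [mulVec, dotProduct, Fin.sum_univ_two, map_add, map_smul, add_apply, smul_apply,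
    det_fin_two]
  module

section Trace

variable {K M N P : Type*} [Field K] [AddCommGroup M] [Module K M] [AddCommGroup N] [Module K N]
  [AddCommGroup P] [Module K P]

theorem LinearMap.trace_prod_eq_add [FiniteDimensional K M] [FiniteDimensional K P]
    (T : M × P →ₗ[K] M × P) :
    trace K (M × P) T = trace K M (fst K M P ∘ₗ T ∘ₗ inl K M P) +
      trace K P (snd K M P ∘ₗ T ∘ₗ inr K M P) := by
  have hT : T = (T ∘ₗ inl K M P) ∘ₗ fst K M P + (T ∘ₗ inr K M P) ∘ₗ snd K M P := by
    refine LinearMap.ext fun x => ?_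
    simp [← map_add]
  conv_lhs => rw [hT]
  rw [map_add, trace_comp_comm', trace_comp_comm' _ (snd K M P)]

theorem Function.Exact.of_comp_eq_zero_of_finrank_eq [FiniteDimensional K N] {u : M →ₗ[K] N}
    {f : N →ₗ[K] P} (hfu : f ∘ₗ u = 0) (hu : Function.Injective u)
    (hf : Function.Surjective f)
    (hdim : Module.finrank K N = Module.finrank K M + Module.finrank K P) :
    Function.Exact u f := by
  rw [LinearMap.exact_iff]
  refine (Submodule.eq_of_le_of_finrank_eq (range_le_ker_iff.2 hfu) ?_).symm
  have := f.finrank_range_add_finrank_ker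
  rw [range_eq_top.2 hf, finrank_top, hdim] at this
  rw [LinearMap.finrank_range_of_inj hu]
  omega

theorem LinearMap.trace_eq_add_of_exact [FiniteDimensional K M] [FiniteDimensional K N]
    [FiniteDimensional K P] {u : M →ₗ[K] N} {f : N →ₗ[K] P} (hexact : Function.Exact u f)
    (hu : Function.Injective u) (hf : Function.Surjective f) {α : M →ₗ[K] M}
    {σ : N →ₗ[K] N} {β : P →ₗ[K] P} (hα : σ ∘ₗ u = u ∘ₗ α) (hβ : f ∘ₗ σ = β ∘ₗ f) :
    trace K N σ = trace K M α + trace K P β := by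
  obtain ⟨l, hl⟩ := f.exists_rightInverse_of_surjective (range_eq_top.mpr hf)
  obtain ⟨e, rfl, rfl⟩ : ∃ e : N ≃ₗ[K] M × P, u = e.symm ∘ₗ inl K M P ∧ f = snd K M P ∘ₗ e :=
    ⟨_, (hexact.splitSurjectiveEquiv hu ⟨l, hl⟩).2⟩
  rw [← trace_conj' σ e, trace_prod_eq_add]
  congr 2
  · ext x
    simpa using congr(fst K M P (e $(LinearMap.congr_fun hα x)))
  · ext x
    simpa using LinearMap.congr_fun hβ (e.symm (0, x))

end Trace

theorem Matrix.SpecialLinearGroup.eq_one_of_trace_eq_two {K : Type*} [Field K] [CharZero K]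
    {A : SL(2, K)} (hA : IsOfFinOrder A) (htr : (A : Matrix (Fin 2) (Fin 2) K).trace = 2) :
    A = 1 := by
  obtain ⟨n, hn, hAn⟩ := hA.exists_pow_eq_one
  set N := (A : Matrix (Fin 2) (Fin 2) K) - 1 with hN
  have hN2 : N * N = 0 := by
    have := aeval_self_charpoly (A : Matrix (Fin 2) (Fin 2) K)
    rw [charpoly_fin_two, htr, SpecialLinearGroup.det_coe] at this
    simp only [map_sub, map_add, map_pow, map_mul, Polynomial.aeval_X, map_ofNat, map_one]
      at this
    rw [← this, hN]
    noncomm_ring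
  have hpow (m : ℕ) : (A : Matrix (Fin 2) (Fin 2) K) ^ m = 1 + (m : K) • N := by
    induction m with
    | zero => simp
    | succ m ih =>
      have hA1 : (A : Matrix (Fin 2) (Fin 2) K) = 1 + N := by rw [hN]; abel
      rw [pow_succ, ih, hA1]
      simp only [mul_add, add_mul, mul_one, one_mul, smul_mul_assoc, hN2, smul_zero]
      push_cast
      module
  have : (n : K) • N = 0 := by
    simpa [hpow] using congr(($hAn : Matrix (Fin 2) (Fin 2) K))
  rw [smul_eq_zero, Nat.cast_eq_zero, sub_eq_zero] at this
  exact Subtype.ext (this.resolve_left hn.ne')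

namespace Representation

section ofSpecialLinearGroup

variable {G K n : Type*} [Group G] [CommRing K] [Fintype n] [DecidableEq n]

def ofSpecialLinearGroup (φ : G →* SpecialLinearGroup n K) : Representation K G (n → K) where
  toFun g := (φ g : Matrix n n K).mulVecLin
  map_one' := by ext; simp
  map_mul' g h := by ext; simp

@[simp]
theorem ofSpecialLinearGroup_apply (φ : G →* SpecialLinearGroup n K) (g : G) (v : n → K) :
    ofSpecialLinearGroup φ g v = (φ g : Matrix n n K) *ᵥ v := rfl

theorem trace_ofSpecialLinearGroup (φ : G →* SpecialLinearGroup n K) (g : G) :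
    trace K _ (ofSpecialLinearGroup φ g) = (φ g : Matrix n n K).trace :=
  Matrix.trace_toLin'_eq _

end ofSpecialLinearGroup

variable {G K Y : Type*} [Group G] [Field K] [AddCommGroup Y] [Module K Y]
  {ρ : Representation K G Y}

theorem isIrreducible_of_forall_submodule [Nontrivial Y]
    (h : ∀ p : Submodule K Y, (∀ g : G, ∀ v ∈ p, ρ g v ∈ p) → p = ⊥ ∨ p = ⊤) :
    IsIrreducible ρ where
  exists_pair_ne := ⟨⊥, ⊤, fun h' => bot_ne_top congr(($h').toSubmodule)⟩
  eq_bot_or_eq_top W := by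
    rcases h W.toSubmodule fun g v hv => W.apply_mem_toSubmodule g hv with hW | hW
    · exact Or.inl (Subrepresentation.toSubmodule_injective hW)
    · exact Or.inr (Subrepresentation.toSubmodule_injective hW)

namespace IsIrreducible

theorem nontrivial (ρ : Representation K G Y) [IsIrreducible ρ] : Nontrivial Y := by
  by_contra hY
  rw [not_nontrivial_iff_subsingleton] at hY
  exact bot_ne_top (α := Subrepresentation ρ)
    (Subrepresentation.toSubmodule_injective (Subsingleton.elim _ _))

variable [IsIrreducible ρ]

theorem eq_zero_of_trace_eq_zero [FiniteDimensional K Y] [IsAlgClosed K] [CharZero K]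
    (T : IntertwiningMap ρ ρ) (hT : trace K Y T.toLinearMap = 0) : T = 0 := by
  have := nontrivial ρ
  obtain ⟨c, rfl⟩ := algebraMap_intertwiningMap_bijective_of_isAlgClosed.2 T
  have hone : (1 : IntertwiningMap ρ ρ).toLinearMap = LinearMap.id := rfl
  have hc : c * Module.finrank K Y = 0 := by
    simpa [IntertwiningMap.toLinearMap_smul, hone] using hT
  rw [(mul_eq_zero.1 hc).resolve_right (Nat.cast_ne_zero.2 Module.finrank_pos.ne'), map_zero]

theorem exists_ne_one_trace_ne_zero [Fintype G] [Nontrivial G] [CharZero K]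
    [FiniteDimensional K Y] : ∃ g ≠ 1, trace K Y (ρ g) ≠ 0 := by
  have := nontrivial ρ
  have hdim : (Module.finrank K Y : K) ≠ 0 := Nat.cast_ne_zero.2 Module.finrank_pos.ne'
  by_contra! h
  have htr : trace K Y ρ.norm = Module.finrank K Y := by
    rw [norm, map_sum, Finset.sum_eq_single 1 (fun g _ hg => h g hg) (by simp), map_one,
      trace_one]
  obtain ⟨y, hy⟩ : ∃ y, ρ.norm y ≠ 0 := by
    by_contra! h0
    exact hdim (by rw [← htr, show ρ.norm = 0 from LinearMap.ext h0, map_zero])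
  let I : Subrepresentation ρ :=
    ⟨ρ.invariants, fun g v hv => by simp [(mem_invariants ρ v).1 hv]⟩
  have hI : I = ⊤ := (eq_bot_or_eq_top I).resolve_left fun hI => hy <| by
    have : ρ.norm y ∈ I := fun g => self_norm_apply ρ g y
    rwa [hI] at this
  obtain ⟨g, hg⟩ := exists_ne (1 : G)
  have hρg : ρ g = 1 := LinearMap.ext fun v => (show v ∈ I by rw [hI]; trivial) g
  exact hdim (by rw [← h g hg, hρg, trace_one])

end IsIrreducible

variable {φ : G →* SL(2, K)}

namespace IntertwiningMap

variable (f : IntertwiningMap ((ofSpecialLinearGroup φ).tprod ρ) ρ)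

theorem map_mulVec_tmul (g : G) (v : Fin 2 → K) (y : Y) :
    f (((φ g : Matrix _ _ K) *ᵥ v) ⊗ₜ ρ g y) = ρ g (f (v ⊗ₜ y)) :=
  f.isIntertwining _ _ g (v ⊗ₜ y)

/-- The image of `f` under `Hom(L ⊗ Y, Y) ≅ Hom(Y, L* ⊗ Y) ≅ Hom(Y, L ⊗ Y)`, where `L ≅ L*` via
the determinant pairing; this is why it is equivariant. -/
def symplecticMate : IntertwiningMap ρ ((ofSpecialLinearGroup φ).tprod ρ) where
  toLinearMap :=
    TensorProduct.mk K _ Y (Pi.single 0 1) ∘ₗ curry f.toLinearMap (Pi.single 1 1) -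
      TensorProduct.mk K _ Y (Pi.single 1 1) ∘ₗ curry f.toLinearMap (Pi.single 0 1)
  isIntertwining' g := by
    let B (y : Y) := (TensorProduct.mk K (Fin 2 → K) Y).compl₂ ((curry f.toLinearMap).flip y)
    have hB (y : Y) (v w : Fin 2 → K) : tprod (ofSpecialLinearGroup φ) ρ g (B y v w) =
        B (ρ g y) ((φ g : Matrix _ _ K) *ᵥ v) ((φ g : Matrix _ _ K) *ᵥ w) := by
      simp only [B, compl₂_apply, TensorProduct.mk_apply, flip_apply, curry_apply, tprod_apply,
        map_tmul, ofSpecialLinearGroup_apply, toLinearMap_apply, map_mulVec_tmul]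
    ext y
    change B (ρ g y) _ _ - B (ρ g y) _ _ = tprod _ ρ g (B y _ _ - B y _ _)
    rw [map_sub, hB, hB, sub_flip_mulVec_fin_two, Matrix.SpecialLinearGroup.det_coe, one_smul]

theorem comp_symplecticMate_toLinearMap :
    (f.comp (symplecticMate f)).toLinearMap =
      curry f.toLinearMap (Pi.single 0 1) * curry f.toLinearMap (Pi.single 1 1) -
        curry f.toLinearMap (Pi.single 1 1) * curry f.toLinearMap (Pi.single 0 1) := by
  ext y
  simp [symplecticMate, comp_toLinearMap]

variable [IsIrreducible ρ]

theorem comp_symplecticMate_eq_zero [FiniteDimensional K Y] [IsAlgClosed K] [CharZero K] :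
    f.comp (symplecticMate f) = 0 :=
  IsIrreducible.eq_zero_of_trace_eq_zero _ <| by
    rw [comp_symplecticMate_toLinearMap, map_sub, trace_mul_comm, sub_self]

theorem injective_symplecticMate (hf : f ≠ 0) : Function.Injective (symplecticMate f) := by
  refine (IsIrreducible.injective_or_eq_zero _).resolve_right fun hu => hf ?_
  let π (i : Fin 2) : (Fin 2 → K) ⊗[K] Y →ₗ[K] Y :=
    _root_.TensorProduct.lid K Y ∘ₗ LinearMap.rTensor Y (proj i)
  have hF (i : Fin 2) : curry f.toLinearMap (Pi.single i 1) = 0 := by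
    ext y
    fin_cases i
    · simpa [π, symplecticMate] using congr(π 1 ($hu y))
    · simpa [π, symplecticMate] using congr(π 0 ($hu y))
  ext1
  exact TensorProduct.curry_injective (pi_ext' fun i => ext_ring (hF i))

end IntertwiningMap

theorem trace_mul_trace_eq_two_mul_trace [FiniteDimensional K Y] [IsAlgClosed K] [CharZero K]
    [IsIrreducible ρ] (f : IntertwiningMap ((ofSpecialLinearGroup φ).tprod ρ) ρ) (hf : f ≠ 0)
    (g : G) : (φ g : Matrix (Fin 2) (Fin 2) K).trace * trace K Y (ρ g) = 2 * trace K Y (ρ g) := by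
  have hu := f.injective_symplecticMate hf
  have hsurj := (IsIrreducible.surjective_or_eq_zero f).resolve_right hf
  have hexact := Function.Exact.of_comp_eq_zero_of_finrank_eq
    congr(($f.comp_symplecticMate_eq_zero).toLinearMap) hu hsurj
    (by rw [Module.finrank_tensorProduct, Module.finrank_fin_fun]; ring)
  have := trace_eq_add_of_exact hexact hu hsurj (f.symplecticMate.isIntertwining' g).symm
    (f.isIntertwining' g)
  rw [tprod_apply, trace_tensorProduct', trace_ofSpecialLinearGroup] at this
  rw [this, two_mul]

end Representation

/-- For a nontrivial finite subgroup `Γ` of `SL(2, ℂ)` with tautological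
representation `L = ℂ²`, and any irreducible complex representation `Y` of `Γ`,
`Hom_Γ(L ⊗ Y, Y) = 0`: the McKay graph has no loops. -/
theorem mckay_no_loops (G : Subgroup (Matrix.SpecialLinearGroup (Fin 2) ℂ)) [Fintype G]
    (hG : G ≠ ⊥)
    {Y : Type} [AddCommGroup Y] [Module ℂ Y] [FiniteDimensional ℂ Y]
    (ρ : Representation ℂ G Y) (hnt : Nontrivial Y)
    (hirr : ∀ p : Submodule ℂ Y, (∀ g : G, ∀ v ∈ p, ρ g v ∈ p) → p = ⊥ ∨ p = ⊤)
    (f : TensorProduct ℂ (Fin 2 → ℂ) Y →ₗ[ℂ] Y)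
    (hf : ∀ g : G, f ∘ₗ TensorProduct.map
        (Matrix.mulVecLin ((g : Matrix.SpecialLinearGroup (Fin 2) ℂ) : Matrix (Fin 2) (Fin 2) ℂ))
        (ρ g) = ρ g ∘ₗ f) :
    f = 0 := by
  have : ρ.IsIrreducible := Representation.isIrreducible_of_forall_submodule hirr
  have : Nontrivial G := (Subgroup.nontrivial_iff_ne_bot G).2 hG
  let f' : ((Representation.ofSpecialLinearGroup G.subtype).tprod ρ).IntertwiningMap ρ := ⟨f, hf⟩
  by_contra hf0
  obtain ⟨g, hg, hχ⟩ := Representation.IsIrreducible.exists_ne_one_trace_ne_zero (ρ := ρ)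
  have htr := mul_right_cancel₀ hχ
    (Representation.trace_mul_trace_eq_two_mul_trace f' (fun h => hf0 congr(($h).toLinearMap)) g)
  exact hg (Subtype.ext (SpecialLinearGroup.eq_one_of_trace_eq_two
    (G.subtype.isOfFinOrder (isOfFinOrder_of_finite g)) htr))
end
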